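/- The Before operator distributes over OR as an AND: for extended-real-valued functions X, Y, Z, D_BEFORE X (D_OR Y Z) = D_AND (D_BEFORE X Y) (D_BEFORE X Z). -/
import Mathlib

noncomputable def D_OR {α : Type*} (X Y : α → EReal) : α → EReal :=
  fun s => min (X s) (Y s)

noncomputable def D_AND {α : Type*} (X Y : α → EReal) : α → EReal :=
  fun s => max (X s) (Y s)

noncomputable def D_BEFORE {α : Type*} (X Y : α → EReal) : α → EReal :=
  fun s => if X s < Y s then X s else ⊤

theorem before_distrib_or {α : Type*} (X Y Z : α → EReal) :
    D_BEFORE X (D_OR Y Z) = D_AND (D_BEFORE X Y) (D_BEFORE X Z) := by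
  funext s
  simp only [D_BEFORE, D_OR, D_AND, lt_min_iff]
  split_ifs with h h1 h2 <;> simp_all [le_refl]
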